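/- Let Q*₁,…,Q*_k be probability measures on (𝒳,𝒜), let β*, α ∈ 𝒲_k with αᵢ > 0 for all i, set P* = ∑ᵢ β*ᵢ Q*ᵢ and P_α = ∑ᵢ αᵢ Q*ᵢ, and let Π*_α be the distribution on 𝒳 × [k] of (X,Y) with ℙ(Y=i) = αᵢ and law of X given Y=i equal to Q*ᵢ. Suppose the predictor f : 𝒳 → 𝒲_k is canonically calibrated with respect to Π*_α, i.e. fᵢ(X) = 𝔼[1_{Y=i} | f(X)] a.s. for all i ∈ [k]. Let R_{β*} be the probability measure with density ∑ᵢ β*ᵢ αᵢ^{−1} fᵢ with respect to P_α. Then for every bounded measurable function φ : 𝒲_k → ℝ, 𝔼_{X∼P*}[φ(f(X))] = 𝔼_{X∼R_{β*}}[φ(f(X))]. -/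

import Mathlib

/-! Conditioning on `f(X)` under `Π*_α`, canonical calibration gives, for every bounded
measurable `ψ`, `𝔼[fᵢ(X) ψ(f(X))] = 𝔼[1_{Y=i} ψ(f(X))] = αᵢ 𝔼_{Q*ᵢ}[ψ(f(X))]`. Multiplying by
`β*ᵢ / αᵢ` and summing over `i`, the left sides add up to the `R_{β*}`-expectation of `ψ(f(X))`
and the right sides to its `P*`-expectation. -/

open MeasureTheory Real
open scoped ENNReal

noncomputable section

variable {𝒳 : Type*} [MeasurableSpace 𝒳]

/-- Squared Hellinger distance between two measures. -/
def hellingerSq (P Q : Measure 𝒳) : ℝ :=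
  (1 / 2) * ∫ x, (Real.sqrt ((P.rnDeriv (P + Q) x).toReal)
      - Real.sqrt ((Q.rnDeriv (P + Q) x).toReal)) ^ 2 ∂(P + Q)

/-- Hellinger distance between two measures. -/
def hellinger (P Q : Measure 𝒳) : ℝ := Real.sqrt (hellingerSq P Q)

/-- Hellinger distance between two weight vectors. -/
def hellingerVec {k : ℕ} (w w' : Fin k → ℝ) : ℝ :=
  Real.sqrt ((1 / 2) * ∑ i, (Real.sqrt (w i) - Real.sqrt (w' i)) ^ 2)

/-- Total variation distance. -/
def tvDist (P Q : Measure 𝒳) : ℝ :=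
  ⨆ s : { s : Set 𝒳 // MeasurableSet s }, |(P s.1).toReal - (Q s.1).toReal|

/-- Mixture of measures with real weights. -/
def mix {k : ℕ} (β : Fin k → ℝ) (Q : Fin k → Measure 𝒳) : Measure 𝒳 :=
  ∑ i, ENNReal.ofReal (β i) • Q i

/-- Linear independence of finite measures, viewed in the real vector space of
finite signed measures: the only real linear combination vanishing on every
measurable set is the trivial one. -/
def MeasLinIndep {k : ℕ} (F : Fin k → Measure 𝒳) : Prop :=
  ∀ c : Fin k → ℝ, (∀ s : Set 𝒳, MeasurableSet s → ∑ i, c i * (F i s).toReal = 0) → c = 0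

/-- The constant Δ*(F₁,…,F_k). -/
def Δstar {k : ℕ} (F : Fin k → Measure 𝒳) : ℝ :=
  ⨅ I : { I : Finset (Fin k) // I.Nonempty ∧ I ≠ Finset.univ },
    ⨅ γ : { γ : Fin k → ℝ // (∀ i, 0 ≤ γ i) ∧ ∑ i ∈ I.1, γ i = 1 },
      ⨅ l : { l : Fin k → ℝ // (∀ i, 0 ≤ l i) ∧ ∑ i ∈ I.1ᶜ, l i = 1 },
        tvDist (∑ i ∈ I.1, ENNReal.ofReal (γ.1 i) • F i)
          (∑ i ∈ I.1ᶜ, ENNReal.ofReal (l.1 i) • F i)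

/-- ψ(√r) where ψ(x) = (x−1)/(x+1), with ψ(√∞) = 1. -/
def ψρ (r : ℝ≥0∞) : ℝ :=
  if r = ⊤ then 1 else (Real.sqrt r.toReal - 1) / (Real.sqrt r.toReal + 1)

/-- Ratio b/a in [0,∞] with conventions 0/0 = 1 and a/0 = ∞ for a > 0. -/
def densRatio (a b : ℝ) : ℝ≥0∞ :=
  if a = 0 ∧ b = 0 then 1 else ENNReal.ofReal b / ENNReal.ofReal a

/-- The statistic T(x,q,q') = ∑ᵢ ψ(√(q'(xᵢ)/q(xᵢ))). -/
def Tρ {n : ℕ} (x : Fin n → 𝒳) (q q' : 𝒳 → ℝ) : ℝ :=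
  ∑ i, ψρ (densRatio (q (x i)) (q' (x i)))

/-- The rational points of the simplex, 𝒲_k ∩ ℚ^k. -/
def ratSimplex (k : ℕ) : Set (Fin k → ℝ) :=
  { β | β ∈ stdSimplex ℝ (Fin k) ∧ ∀ i, ∃ r : ℚ, β i = (r : ℝ) }

/-- Mixture density ∑ⱼ βⱼ qⱼ. -/
def mixDens {k : ℕ} (q : Fin k → 𝒳 → ℝ) (β : Fin k → ℝ) : 𝒳 → ℝ :=
  fun x => ∑ j, β j * q j x

/-- Υ(x,p) = sup over the model ℳ_mix(q₁,…,q_k) of T(x,p,·). -/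
def Υρ {n k : ℕ} (q : Fin k → 𝒳 → ℝ) (x : Fin n → 𝒳) (p : 𝒳 → ℝ) : ℝ :=
  ⨆ β : ratSimplex k, Tρ x p (mixDens q β.1)

/-- The set 𝓔(x) of candidate ρ-estimators on the model ℳ_mix(q₁,…,q_k). -/
def rhoEstSet {n k : ℕ} (μ : Measure 𝒳) (q : Fin k → 𝒳 → ℝ) (x : Fin n → 𝒳) :
    Set (Measure 𝒳) :=
  { P | ∃ β ∈ ratSimplex k,
      P = μ.withDensity (fun y => ENNReal.ofReal (mixDens q β y)) ∧
      Υρ q x (mixDens q β) < (⨅ β' : ratSimplex k, Υρ q x (mixDens q β'.1)) + 11.36 }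

/-- Closure of a set of measures with respect to the Hellinger distance. -/
def hellClosure (S : Set (Measure 𝒳)) : Set (Measure 𝒳) :=
  { P | ∀ ε > 0, ∃ Q ∈ S, hellinger P Q < ε }

/-- The Bayes predictor associated with weights α and densities q. -/
def bayesPred {k : ℕ} (α : Fin k → ℝ) (q : Fin k → 𝒳 → ℝ) : 𝒳 → Fin k → ℝ :=
  fun x i => α i * q i x / ∑ j, α j * q j x

/-- The joint distribution Π*_α on 𝒳 × [k] with ℙ(Y = i) = αᵢ and law of X given
Y = i equal to Q i. -/
def jointLaw {k : ℕ} (α : Fin k → ℝ) (Q : Fin k → Measure 𝒳) : Measure (𝒳 × Fin k) :=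
  ∑ i, ENNReal.ofReal (α i) • ((Q i).prod (Measure.dirac i))

/-- Marginal calibration: fᵢ(X) = 𝔼[1_{Y=i} | fᵢ(X)] a.s. for all i. -/
def MarginallyCalibrated {k : ℕ} (f : 𝒳 → Fin k → ℝ) (Pm : Measure (𝒳 × Fin k)) : Prop :=
  ∀ i, (fun ω : 𝒳 × Fin k => f ω.1 i)
    =ᵐ[Pm] Pm[(fun ω : 𝒳 × Fin k => if ω.2 = i then (1 : ℝ) else 0) |
        MeasurableSpace.comap (fun ω : 𝒳 × Fin k => f ω.1 i) inferInstance]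

/-- Canonical calibration: fᵢ(X) = 𝔼[1_{Y=i} | f(X)] a.s. for all i. -/
def CanonicallyCalibrated {k : ℕ} (f : 𝒳 → Fin k → ℝ) (Pm : Measure (𝒳 × Fin k)) : Prop :=
  ∀ i, (fun ω : 𝒳 × Fin k => f ω.1 i)
    =ᵐ[Pm] Pm[(fun ω : 𝒳 × Fin k => if ω.2 = i then (1 : ℝ) else 0) |
        MeasurableSpace.comap (fun ω : 𝒳 × Fin k => f ω.1) inferInstance]

open scoped Classical in
/-- Kullback–Leibler divergence. -/
def klDiv' (P Q : Measure 𝒳) : EReal :=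
  if P ≪ Q ∧ Integrable (fun x => Real.log ((P.rnDeriv Q x).toReal)) P
  then ((∫ x, Real.log ((P.rnDeriv Q x).toReal) ∂P : ℝ) : EReal)
  else ⊤

end

section

variable {𝒳 : Type*} [MeasurableSpace 𝒳]

lemma integral_finset_sum_ofReal_smul_measure {Y ι : Type*} [MeasurableSpace Y] (s : Finset ι)
    {w : ι → ℝ} (hw : ∀ i ∈ s, 0 ≤ w i) {μ : ι → Measure Y} {g : Y → ℝ}
    (hg : ∀ i ∈ s, Integrable g (μ i)) :
    ∫ y, g y ∂(∑ i ∈ s, ENNReal.ofReal (w i) • μ i) = ∑ i ∈ s, w i * ∫ y, g y ∂(μ i) := by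
  rw [integral_finsetSum_measure fun i hi => (hg i hi).smul_measure ENNReal.ofReal_ne_top]
  refine Finset.sum_congr rfl fun i hi => ?_
  rw [integral_smul_measure, ENNReal.toReal_ofReal (hw i hi), smul_eq_mul]

instance isFiniteMeasure_mix {k : ℕ} (β : Fin k → ℝ) (Q : Fin k → Measure 𝒳)
    [∀ i, IsFiniteMeasure (Q i)] : IsFiniteMeasure (mix β Q) :=
  have := fun i => (Q i).smul_finite (ENNReal.ofReal_ne_top (r := β i))
  inferInstanceAs (IsFiniteMeasure (∑ i, ENNReal.ofReal (β i) • Q i))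

lemma integral_mix {k : ℕ} {β : Fin k → ℝ} (hβ : ∀ i, 0 ≤ β i) {Q : Fin k → Measure 𝒳}
    {g : 𝒳 → ℝ} (hg : ∀ i, Integrable g (Q i)) :
    ∫ x, g x ∂(mix β Q) = ∑ i, β i * ∫ x, g x ∂(Q i) :=
  integral_finset_sum_ofReal_smul_measure _ (fun i _ => hβ i) fun i _ => hg i

lemma jointLaw_eq_sum_map {k : ℕ} (α : Fin k → ℝ) (Q : Fin k → Measure 𝒳)
    [∀ i, SFinite (Q i)] :
    jointLaw α Q = ∑ i, ENNReal.ofReal (α i) • (Q i).map (fun x => (x, i)) := by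
  simp only [jointLaw, Measure.prod_dirac]

instance isFiniteMeasure_jointLaw {k : ℕ} (α : Fin k → ℝ) (Q : Fin k → Measure 𝒳)
    [∀ i, IsFiniteMeasure (Q i)] : IsFiniteMeasure (jointLaw α Q) := by
  rw [jointLaw_eq_sum_map]
  have := fun i => ((Q i).map (fun x => (x, i))).smul_finite (ENNReal.ofReal_ne_top (r := α i))
  infer_instance

lemma map_fst_jointLaw {k : ℕ} (α : Fin k → ℝ) (Q : Fin k → Measure 𝒳)
    [∀ i, IsProbabilityMeasure (Q i)] : (jointLaw α Q).map Prod.fst = mix α Q := by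
  rw [jointLaw, Measure.map_finset_sum' measurable_fst.aemeasurable]
  simp only [Measure.map_smul, Measure.map_fst_prod, measure_univ, one_smul, mix]

lemma integral_jointLaw {k : ℕ} {α : Fin k → ℝ} (hα : ∀ i, 0 ≤ α i) {Q : Fin k → Measure 𝒳}
    [∀ i, SFinite (Q i)] {G : 𝒳 × Fin k → ℝ} (hG : Measurable G)
    (hGi : ∀ i, Integrable (fun x => G (x, i)) (Q i)) :
    ∫ ω, G ω ∂(jointLaw α Q) = ∑ i, α i * ∫ x, G (x, i) ∂(Q i) := by
  rw [jointLaw_eq_sum_map, integral_finset_sum_ofReal_smul_measure _ (fun i _ => hα i)]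
  · simp only [integral_map measurable_prodMk_right.aemeasurable hG.aestronglyMeasurable]
  · intro i _
    exact (integrable_map_measure hG.aestronglyMeasurable
      measurable_prodMk_right.aemeasurable).2 (hGi i)

lemma measurable_ite_snd_eq {k : ℕ} (i : Fin k) :
    Measurable fun ω : 𝒳 × Fin k => if ω.2 = i then (1 : ℝ) else 0 :=
  (measurable_of_countable fun j : Fin k => if j = i then (1 : ℝ) else 0).comp measurable_snd

theorem CanonicallyCalibrated.integral_mul_comp {k : ℕ} {f : 𝒳 → Fin k → ℝ}
    {Pm : Measure (𝒳 × Fin k)} [IsFiniteMeasure Pm] (hcal : CanonicallyCalibrated f Pm)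
    (hf : Measurable f) {ψ : (Fin k → ℝ) → ℝ} (hψ : Measurable ψ) {C : ℝ}
    (hψC : ∀ v, ‖ψ v‖ ≤ C) (i : Fin k) :
    ∫ ω, f ω.1 i * ψ (f ω.1) ∂Pm = ∫ ω, ψ (f ω.1) * (if ω.2 = i then 1 else 0) ∂Pm := by
  set ind : 𝒳 × Fin k → ℝ := fun ω => if ω.2 = i then 1 else 0
  have hind : Measurable ind := measurable_ite_snd_eq i
  have hind_int : Integrable ind Pm :=
    .of_bound hind.aestronglyMeasurable 1 (ae_of_all _ fun ω => by
      by_cases h : ω.2 = i <;> simp [ind, h])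
  have hm : MeasurableSpace.comap (fun ω : 𝒳 × Fin k => f ω.1) inferInstance ≤
      Prod.instMeasurableSpace := (hf.comp measurable_fst).comap_le
  have hψf_ind_int : Integrable (fun ω : 𝒳 × Fin k => ψ (f ω.1) * ind ω) Pm :=
    hind_int.bdd_mul (hψ.comp (hf.comp measurable_fst)).aestronglyMeasurable
      (ae_of_all _ fun ω => hψC _)
  set m := MeasurableSpace.comap (fun ω : 𝒳 × Fin k => f ω.1) inferInstance
  have hψf_m : StronglyMeasurable[m] fun ω : 𝒳 × Fin k => ψ (f ω.1) :=
    (hψ.comp (comap_measurable _)).stronglyMeasurable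
  have hcal_i : (fun ω : 𝒳 × Fin k => f ω.1 i) =ᵐ[Pm] Pm[ind | m] := hcal i
  calc ∫ ω, f ω.1 i * ψ (f ω.1) ∂Pm
      = ∫ ω, ((fun ω : 𝒳 × Fin k => ψ (f ω.1)) * Pm[ind | m]) ω ∂Pm :=
        integral_congr_ae <| hcal_i.mono fun ω hω => by rw [Pi.mul_apply, ← hω, mul_comm]
    _ = ∫ ω, Pm[(fun ω : 𝒳 × Fin k => ψ (f ω.1)) * ind | m] ω ∂Pm :=
        integral_congr_ae (condExp_mul_of_stronglyMeasurable_left hψf_m hψf_ind_int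
          hind_int).symm
    _ = ∫ ω, ψ (f ω.1) * ind ω ∂Pm := integral_condExp hm

theorem CanonicallyCalibrated.integral_mul_comp_mix {k : ℕ} {α : Fin k → ℝ}
    {Q : Fin k → Measure 𝒳} [∀ i, IsProbabilityMeasure (Q i)] {f : 𝒳 → Fin k → ℝ}
    (hcal : CanonicallyCalibrated f (jointLaw α Q)) (hα : ∀ i, 0 ≤ α i) (hf : Measurable f)
    {ψ : (Fin k → ℝ) → ℝ} (hψ : Measurable ψ) {C : ℝ} (hψC : ∀ v, ‖ψ v‖ ≤ C) (i : Fin k) :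
    ∫ x, f x i * ψ (f x) ∂(mix α Q) = α i * ∫ x, ψ (f x) ∂(Q i) := by
  have hψf : Measurable fun x => ψ (f x) := hψ.comp hf
  have hψf_int (j : Fin k) : Integrable (fun x => ψ (f x)) (Q j) :=
    .of_bound hψf.aestronglyMeasurable C (ae_of_all _ fun x => hψC _)
  rw [← map_fst_jointLaw, integral_map (f := fun x => f x i * ψ (f x))
      measurable_fst.aemeasurable ((hf.eval (a := i)).mul hψf).aestronglyMeasurable,
    hcal.integral_mul_comp hf hψ hψC i,
    integral_jointLaw (G := fun ω => ψ (f ω.1) * if ω.2 = i then 1 else 0) hα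
      ((hψf.comp measurable_fst).mul (measurable_ite_snd_eq i))]
  · rw [Finset.sum_eq_single i (fun j _ hj => by simp [hj]) (by simp)]
    simp
  · intro j
    by_cases h : j = i <;> simp [h, hψf_int]

lemma integral_withDensity_ofReal {Y : Type*} [MeasurableSpace Y] {μ : Measure Y} {d : Y → ℝ}
    (hd : Measurable d) (hd0 : ∀ y, 0 ≤ d y) (g : Y → ℝ) :
    ∫ y, g y ∂μ.withDensity (fun y => ENNReal.ofReal (d y)) = ∫ y, d y * g y ∂μ := by
  rw [integral_withDensity_eq_integral_toReal_smul hd.ennreal_ofReal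
    (ae_of_all _ fun _ => ENNReal.ofReal_lt_top)]
  simp only [ENNReal.toReal_ofReal (hd0 _), smul_eq_mul]

theorem statement19_general {k : ℕ}
    (Qstar : Fin k → Measure 𝒳) [∀ i, IsProbabilityMeasure (Qstar i)]
    (βstar α : Fin k → ℝ) (hβstar : βstar ∈ stdSimplex ℝ (Fin k))
    (hαpos : ∀ i, 0 < α i)
    (f : 𝒳 → Fin k → ℝ) (hf_meas : Measurable f) (hf : ∀ x, f x ∈ stdSimplex ℝ (Fin k))
    (hcal : CanonicallyCalibrated f (jointLaw α Qstar))
    (φ : (Fin k → ℝ) → ℝ) (hφ_meas : Measurable φ) (hφ_bdd : ∃ Cb : ℝ, ∀ v, |φ v| ≤ Cb) :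
    ∫ x, φ (f x) ∂(mix βstar Qstar)
      = ∫ x, φ (f x)
          ∂((mix α Qstar).withDensity fun x =>
              ENNReal.ofReal (∑ i, βstar i / α i * f x i)) := by
  obtain ⟨C, hφC⟩ := hφ_bdd
  have hφf : Measurable fun x => φ (f x) := hφ_meas.comp hf_meas
  have hφf_int {μ : Measure 𝒳} [IsFiniteMeasure μ] : Integrable (fun x => φ (f x)) μ :=
    .of_bound hφf.aestronglyMeasurable C (ae_of_all _ fun x => hφC _)
  have hf_mul_φf_int (i : Fin k) : Integrable (fun x => f x i * φ (f x)) (mix α Qstar) :=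
    hφf_int.bdd_mul (c := 1) (hf_meas.eval (a := i)).aestronglyMeasurable
      (ae_of_all _ fun x => by
        obtain ⟨h0, h1⟩ := mem_Icc_of_mem_stdSimplex (hf x) i
        rwa [Real.norm_of_nonneg h0])
  rw [integral_withDensity_ofReal (by fun_prop) fun x =>
    Finset.sum_nonneg fun i _ => mul_nonneg (div_nonneg (hβstar.1 i) (hαpos i).le) ((hf x).1 i)]
  calc ∫ x, φ (f x) ∂(mix βstar Qstar)
      = ∑ i, βstar i * ∫ x, φ (f x) ∂(Qstar i) := integral_mix hβstar.1 fun i => hφf_int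
    _ = ∑ i, βstar i / α i * ∫ x, f x i * φ (f x) ∂(mix α Qstar) := by
      refine Finset.sum_congr rfl fun i _ => ?_
      rw [hcal.integral_mul_comp_mix (fun j => (hαpos j).le) hf_meas hφ_meas hφC i,
        ← mul_assoc, div_mul_cancel₀ _ (hαpos i).ne']
    _ = ∫ x, (∑ i, βstar i / α i * f x i) * φ (f x) ∂(mix α Qstar) := by
      simp_rw [← integral_const_mul, Finset.sum_mul, mul_assoc]
      exact (integral_finsetSum _ fun i _ => (hf_mul_φf_int i).const_mul _).symm

theorem statement19 {k : ℕ} (hk : 2 ≤ k)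
    (Qstar : Fin k → Measure 𝒳) [∀ i, IsProbabilityMeasure (Qstar i)]
    (βstar α : Fin k → ℝ) (hβstar : βstar ∈ stdSimplex ℝ (Fin k))
    (hα : α ∈ stdSimplex ℝ (Fin k)) (hαpos : ∀ i, 0 < α i)
    (f : 𝒳 → Fin k → ℝ) (hf_meas : Measurable f) (hf : ∀ x, f x ∈ stdSimplex ℝ (Fin k))
    (hcal : CanonicallyCalibrated f (jointLaw α Qstar))
    (φ : (Fin k → ℝ) → ℝ) (hφ_meas : Measurable φ) (hφ_bdd : ∃ Cb : ℝ, ∀ v, |φ v| ≤ Cb) :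
    ∫ x, φ (f x) ∂(mix βstar Qstar)
      = ∫ x, φ (f x)
          ∂((mix α Qstar).withDensity fun x =>
              ENNReal.ofReal (∑ i, βstar i / α i * f x i)) :=
  statement19_general Qstar βstar α hβstar hαpos f hf_meas hf hcal φ hφ_meas hφ_bdd

end
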